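/- arXiv:1202.4504 — 5 statements merged into one kernel-verified Lean document; each statement's English description precedes it below -/
import Mathlib

section
/- For every RBM instance, the optimal value of the 0-1 integer program IP (the minimum of z(x) over feasible 0-1 solutions x) equals the optimal cost of the reordering buffer management instance, namely the minimum, over all bijections σ : {1,…,n} → {k+1,…,k+n} satisfying σ(i) ≥ i for every item i, of the number of maximal monochromatic blocks of the output sequence σ⁻¹(k+1), σ⁻¹(k+2), …, σ⁻¹(k+n), where consecutive positions j and j+1 lie in the same block iff c(σ⁻¹(j)) = c(σ⁻¹(j+1)). -/
/-!
A 0-1 solution is the assignment matrix of a schedule `σ` (item `i` is output at time `σ i`),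
and constraint (3) says exactly that `σ` follows up: whenever the next item `n(i)` of the colour
of `i` has arrived by time `σ i + 1`, it is output at that time. For such a schedule the items
with `σ i ≤ n(i) - 2` are exactly the last items of the maximal monochromatic blocks, so `z`
counts the blocks.

Conversely, every schedule can be made to follow up without creating colour changes. Swapping
items of equal colour, which leaves the colour sequence unchanged, first outputs every colour
class in arrival order. Then, for `p` from left to right, if the next item of the colour of the
item at position `p` has arrived by time `p + 1`, it is moved forward to position `p + 1`: it has
the colour of position `p`, so the colour sequence only loses an entry and gains a copy of a
neighbour.
-/

open Finset

open scoped Classical in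
/-- The next item of the same color as item `i`, or `k+n+2` if `i` is the last of its color. -/
noncomputable def nxt (k n : ℕ) (c : ℕ → ℕ) (i : ℕ) : ℕ :=
  if h : ∃ i', (i < i' ∧ i' ≤ n) ∧ c i' = c i then Nat.find h else k + n + 2

/-- Feasibility of a fractional solution of the RBM linear program. -/
def Feasible (k n : ℕ) (c : ℕ → ℕ) (x : ℕ → ℕ → ℝ) : Prop :=
  (∀ i j, ¬(1 ≤ i ∧ i ≤ n ∧ max i (k+1) ≤ j ∧ j ≤ k + n) → x i j = 0) ∧
  (∀ i, 1 ≤ i → i ≤ n → ∑ j ∈ Finset.Icc (max i (k+1)) (k+n), x i j = 1) ∧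
  (∀ j, k+1 ≤ j → j ≤ k+n → ∑ i ∈ Finset.Icc 1 (min j n), x i j = 1) ∧
  (∀ i, 1 ≤ i → i ≤ n → nxt k n c i ≤ n →
    ∀ j, nxt k n c i ≤ j → x (nxt k n c i) j - x i (j-1) ≥ 0) ∧
  (∀ i j, 0 ≤ x i j)

/-- The cost `z(x)` of a fractional solution. -/
noncomputable def cost (k n : ℕ) (c : ℕ → ℕ) (x : ℕ → ℕ → ℝ) : ℝ :=
  ∑ i ∈ Finset.Icc 1 n, ∑ j ∈ Finset.Icc (max i (k+1)) (nxt k n c i - 2), x i j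

/-- The weight `w_i^j` of item `i` at time `j`. -/
def weight (k : ℕ) (x : ℕ → ℕ → ℝ) (i j : ℕ) : ℝ :=
  1 - ∑ j' ∈ Finset.Icc (max i (k+1)) j, x i j'

section

variable {k n : ℕ} {c : ℕ → ℕ}

lemma lt_nxt {i : ℕ} (hi : i ≤ n) : i < nxt k n c i := by
  unfold nxt
  split_ifs with h
  · exact (Nat.find_spec h).1.1
  · omega

lemma nxt_le_of_lt {i i' : ℕ} (hii' : i < i') (hi' : i' ≤ n) (hc : c i' = c i) :
    nxt k n c i ≤ i' := by
  have h : ∃ j, (i < j ∧ j ≤ n) ∧ c j = c i := ⟨i', ⟨hii', hi'⟩, hc⟩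
  rw [nxt, dif_pos h]
  exact Nat.find_min' h ⟨⟨hii', hi'⟩, hc⟩

lemma nxt_le_of_le {i : ℕ} (h : nxt k n c i ≤ k + n + 1) : nxt k n c i ≤ n := by
  unfold nxt at h ⊢
  split_ifs at h ⊢ with hex
  · exact (Nat.find_spec hex).1.2
  · omega

lemma color_nxt {i : ℕ} (h : nxt k n c i ≤ n) : c (nxt k n c i) = c i := by
  unfold nxt at h ⊢
  split_ifs at h ⊢ with hex
  · exact (Nat.find_spec hex).2
  · omega

lemma nxt_mem {i : ℕ} (hi : i ∈ Icc 1 n) (h : nxt k n c i ≤ k + n + 1) :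
    nxt k n c i ∈ Icc 1 n := by
  have := lt_nxt (k := k) (c := c) (mem_Icc.mp hi).2
  exact mem_Icc.mpr ⟨by simp only [mem_Icc] at hi; omega, nxt_le_of_le h⟩

section Changes

variable {α : Type*} [DecidableEq α]

def changes (f : ℕ → α) (a b : ℕ) : ℕ := #{j ∈ Ico a b | f j ≠ f (j + 1)}

lemma changes_add (f : ℕ → α) {a b d : ℕ} (hab : a ≤ b) (hbd : b ≤ d) :
    changes f a b + changes f b d = changes f a d := by
  simp only [changes, card_filter]
  exact sum_Ico_consecutive _ hab hbd

lemma changes_mono (f : ℕ → α) {a a' b b' : ℕ} (ha : a' ≤ a) (hb : b ≤ b') :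
    changes f a b ≤ changes f a' b' :=
  card_le_card (filter_subset_filter _ (Ico_subset_Ico ha hb))

lemma changes_self_succ (f : ℕ → α) (b : ℕ) :
    changes f b (b + 1) = if f b = f (b + 1) then 0 else 1 := by
  simp only [changes, Nat.Ico_succ_singleton, filter_singleton]
  split_ifs <;> simp_all

lemma changes_pos_of_ne {f : ℕ → α} {a b : ℕ} (hab : a ≤ b) (h : f a ≠ f b) :
    0 < changes f a b := by
  induction b, hab using Nat.le_induction with
  | base => exact absurd rfl h
  | succ b hab ih =>
    rw [← changes_add f hab b.le_succ, changes_self_succ]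
    by_cases hb : f a = f b
    · rw [if_neg (hb ▸ h)]; omega
    · have := ih hb; omega

lemma changes_comp_le {f : ℕ → α} {s : ℕ → ℕ} (hs : Monotone s) {a b : ℕ} (hab : a ≤ b) :
    changes (f ∘ s) a b ≤ changes f (s a) (s b) := by
  induction b, hab using Nat.le_induction with
  | base => simp [changes]
  | succ b hab ih =>
    rw [← changes_add _ hab b.le_succ, ← changes_add f (hs hab) (hs b.le_succ),
      changes_self_succ]
    refine add_le_add ih ?_
    split_ifs with h
    · exact Nat.zero_le _
    · exact changes_pos_of_ne (hs b.le_succ) h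

end Changes

def IsSchedule (k n : ℕ) (σ τ : ℕ → ℕ) : Prop :=
  (∀ i ∈ Icc 1 n, σ i ∈ Icc (k + 1) (k + n) ∧ i ≤ σ i ∧ τ (σ i) = i) ∧
  (∀ j ∈ Icc (k + 1) (k + n), τ j ∈ Icc 1 n ∧ σ (τ j) = j)

def SortedByColor (n : ℕ) (c σ : ℕ → ℕ) : Prop :=
  ∀ i ∈ Icc 1 n, ∀ i' ∈ Icc 1 n, i < i' → c i = c i' → σ i < σ i'

def FollowsUpBelow (k n : ℕ) (c σ : ℕ → ℕ) (p : ℕ) : Prop :=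
  ∀ i ∈ Icc 1 n, σ i < p → nxt k n c i ≤ σ i + 1 → σ (nxt k n c i) = σ i + 1

def FollowsUp (k n : ℕ) (c σ : ℕ → ℕ) : Prop :=
  ∀ i ∈ Icc 1 n, nxt k n c i ≤ σ i + 1 → σ (nxt k n c i) = σ i + 1

namespace IsSchedule

variable {σ τ : ℕ → ℕ} {i j : ℕ}

lemma apply_mem (h : IsSchedule k n σ τ) (hi : i ∈ Icc 1 n) : σ i ∈ Icc (k + 1) (k + n) :=
  (h.1 i hi).1

lemma le_apply (h : IsSchedule k n σ τ) (hi : i ∈ Icc 1 n) : i ≤ σ i :=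
  (h.1 i hi).2.1

lemma inv_apply (h : IsSchedule k n σ τ) (hi : i ∈ Icc 1 n) : τ (σ i) = i :=
  (h.1 i hi).2.2

lemma inv_mem (h : IsSchedule k n σ τ) (hj : j ∈ Icc (k + 1) (k + n)) : τ j ∈ Icc 1 n :=
  (h.2 j hj).1

lemma apply_inv (h : IsSchedule k n σ τ) (hj : j ∈ Icc (k + 1) (k + n)) : σ (τ j) = j :=
  (h.2 j hj).2

lemma injOn (h : IsSchedule k n σ τ) : Set.InjOn σ (Icc 1 n) := fun i hi i' hi' he => by
  rw [← h.inv_apply hi, he, h.inv_apply hi']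

lemma comp {π π' : ℕ → ℕ} (h : IsSchedule k n σ τ)
    (hπ : ∀ j ∈ Icc (k + 1) (k + n), π j ∈ Icc (k + 1) (k + n) ∧ π' (π j) = j)
    (hπ' : ∀ j ∈ Icc (k + 1) (k + n), π' j ∈ Icc (k + 1) (k + n) ∧ π (π' j) = j)
    (hle : ∀ i ∈ Icc 1 n, i ≤ π' (σ i)) :
    IsSchedule k n (π' ∘ σ) (τ ∘ π) := by
  refine ⟨fun i hi => ⟨(hπ' _ (h.apply_mem hi)).1, hle i hi, ?_⟩, fun j hj => ?_⟩
  · simp only [Function.comp_apply, (hπ' _ (h.apply_mem hi)).2, h.inv_apply hi]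
  · obtain ⟨hπj, hπ'π⟩ := hπ j hj
    exact ⟨h.inv_mem hπj, by simp only [Function.comp_apply, h.apply_inv hπj, hπ'π]⟩

lemma comp_swap {i i' : ℕ} (h : IsSchedule k n σ τ) (hi : i ∈ Icc 1 n) (hi' : i' ∈ Icc 1 n)
    (hle : i ≤ σ i') (hle' : i' ≤ σ i) :
    IsSchedule k n (Equiv.swap (σ i) (σ i') ∘ σ) (τ ∘ Equiv.swap (σ i) (σ i')) := by
  have hmem : ∀ j ∈ Icc (k + 1) (k + n), Equiv.swap (σ i) (σ i') j ∈ Icc (k + 1) (k + n) :=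
    fun j hj => by
      rw [Equiv.swap_apply_def]
      split_ifs
      exacts [h.apply_mem hi', h.apply_mem hi, hj]
  refine h.comp (fun j hj => ⟨hmem j hj, Equiv.swap_apply_self _ _ _⟩)
    (fun j hj => ⟨hmem j hj, Equiv.swap_apply_self _ _ _⟩) (fun m hm => ?_)
  rw [Equiv.swap_apply_def]
  split_ifs with h₁ h₂
  · rwa [h.injOn hm hi h₁]
  · rwa [h.injOn hm hi' h₂]
  · exact h.le_apply hm

lemma exists_sortedByColor (h : IsSchedule k n σ τ) (c : ℕ → ℕ) :
    ∃ σ' τ', IsSchedule k n σ' τ' ∧ SortedByColor n c σ' ∧ c ∘ τ' = c ∘ τ := by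
  -- undoing an inversion of equal colours moves the larger weight to the earlier time
  induction hΦ : ∑ m ∈ Icc 1 n, (n + 1 - m) * σ m using Nat.strong_induction_on
    generalizing σ τ with
  | _ Φ ih =>
  by_cases hs : SortedByColor n c σ
  · exact ⟨σ, τ, h, hs, rfl⟩
  obtain ⟨i, hi, i', hi', hii', hc, hlt⟩ :
      ∃ i ∈ Icc 1 n, ∃ i' ∈ Icc 1 n, i < i' ∧ c i = c i' ∧ σ i' < σ i := by
    simp only [SortedByColor, not_forall, not_lt] at hs
    obtain ⟨i, hi, i', hi', hii', hc, hle⟩ := hs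
    exact ⟨i, hi, i', hi', hii', hc, hle.lt_of_ne fun he => hii'.ne' (h.injOn hi' hi he)⟩
  set π := Equiv.swap (σ i) (σ i')
  have hi'σ := h.le_apply hi'
  have hcol : c ∘ τ ∘ π = c ∘ τ := by
    funext j
    simp only [Function.comp_apply, π, Equiv.swap_apply_def]
    split_ifs with h₁ h₂
    · rw [h₁, h.inv_apply hi, h.inv_apply hi', hc]
    · rw [h₂, h.inv_apply hi, h.inv_apply hi', hc]
    · rfl
  have hdec : ∑ m ∈ Icc 1 n, (n + 1 - m) * π (σ m) < Φ := by
    have hi's : i' ∈ (Icc 1 n).erase i := mem_erase.mpr ⟨hii'.ne', hi'⟩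
    have hrest : ∀ m ∈ ((Icc 1 n).erase i).erase i', π (σ m) = σ m := fun m hm => by
      obtain ⟨hmi', hmi, hm⟩ := (mem_erase.mp hm).imp_right mem_erase.mp
      exact Equiv.swap_apply_of_ne_of_ne (fun he => hmi (h.injOn hm hi he))
        (fun he => hmi' (h.injOn hm hi' he))
    rw [← hΦ, ← add_sum_erase _ (fun m => (n + 1 - m) * π (σ m)) hi,
      ← add_sum_erase _ (fun m => (n + 1 - m) * σ m) hi,
      ← add_sum_erase _ (fun m => (n + 1 - m) * π (σ m)) hi's,
      ← add_sum_erase _ (fun m => (n + 1 - m) * σ m) hi's,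
      sum_congr rfl fun m hm => by rw [hrest m hm]]
    simp only [π, Equiv.swap_apply_left, Equiv.swap_apply_right]
    have : n + 1 - i' < n + 1 - i := by simp only [mem_Icc] at hi'; omega
    nlinarith
  obtain ⟨σ', τ', h₁, h₂, h₃⟩ := ih _ hdec (h.comp_swap hi hi' (by omega) (by omega)) rfl
  exact ⟨σ', τ', h₁, h₂, h₃.trans hcol⟩

lemma sortedByColor_of_followsUp (h : IsSchedule k n σ τ) (hP : FollowsUp k n c σ) :
    SortedByColor n c σ := by
  intro i hi i' hi' hii' hc
  induction hd : i' - i using Nat.strong_induction_on generalizing i with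
  | _ d ih =>
  by_contra hge
  have hlt : σ i' < σ i := (not_lt.mp hge).lt_of_ne fun he => hii'.ne' (h.injOn hi' hi he)
  have hnxt : nxt k n c i ≤ i' := nxt_le_of_lt hii' (mem_Icc.mp hi').2 hc.symm
  have hi'σ := h.le_apply hi'
  have hσi := mem_Icc.mp (h.apply_mem hi)
  have hstep := hP i hi (by omega)
  have hnm := nxt_mem (k := k) (c := c) hi (by omega)
  rcases hnxt.lt_or_eq with hlt' | heq
  · have := lt_nxt (k := k) (c := c) (mem_Icc.mp hi).2
    have := ih (i' - nxt k n c i) (by omega) _ hnm hlt'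
      ((color_nxt (mem_Icc.mp hnm).2).trans hc) rfl
    omega
  · rw [heq] at hstep
    omega

lemma le_nxt_sub_two_iff (h : IsSchedule k n σ τ) (hP : FollowsUp k n c σ) {i : ℕ}
    (hi : i ∈ Icc 1 n) :
    σ i ≤ nxt k n c i - 2 ↔ σ i = k + n ∨ c (τ (σ i)) ≠ c (τ (σ i + 1)) := by
  have hσi := mem_Icc.mp (h.apply_mem hi)
  rw [h.inv_apply hi]
  constructor
  · refine fun hle => or_iff_not_imp_left.mpr fun hne hcol => ?_
    have hj : σ i + 1 ∈ Icc (k + 1) (k + n) := mem_Icc.mpr ⟨by omega, by omega⟩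
    have hi'' := h.inv_mem hj
    have hσi'' := h.apply_inv hj
    rcases lt_trichotomy i (τ (σ i + 1)) with hlt | heq | hgt
    · have := nxt_le_of_lt (k := k) hlt (mem_Icc.mp hi'').2 hcol.symm
      have := h.le_apply hi''
      omega
    · rw [← heq] at hσi''
      omega
    · have := h.sortedByColor_of_followsUp hP _ hi'' i hi hgt hcol.symm
      omega
  · refine fun hor => by_contra fun hgt => ?_
    have hnm := nxt_mem hi (k := k) (c := c) (by omega)
    have hnext := hP i hi (by omega)
    rcases hor with heq | hne
    · have := mem_Icc.mp (h.apply_mem hnm)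
      omega
    · rw [← hnext, h.inv_apply hnm, color_nxt (mem_Icc.mp hnm).2] at hne
      exact hne rfl

lemma card_filter_le_nxt_sub_two (h : IsSchedule k n σ τ) (hP : FollowsUp k n c σ)
    (hn : 1 ≤ n) :
    #{i ∈ Icc 1 n | σ i ≤ nxt k n c i - 2} = changes (c ∘ τ) (k + 1) (k + n) + 1 := by
  have hT : #{j ∈ Icc (k + 1) (k + n) | j = k + n ∨ c (τ j) ≠ c (τ (j + 1))} =
      changes (c ∘ τ) (k + 1) (k + n) + 1 := by
    rw [← Ico_insert_right (by omega), filter_insert, if_pos (Or.inl rfl),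
      card_insert_of_notMem (by simp)]
    congr 2
    exact filter_congr fun j hj => by simp [(mem_Ico.mp hj).2.ne]
  rw [← hT]
  refine card_nbij' σ τ (fun i hi => ?_) (fun j hj => ?_) (fun i hi => ?_) (fun j hj => ?_)
  · rw [mem_coe, mem_filter] at hi ⊢
    exact ⟨h.apply_mem hi.1, (h.le_nxt_sub_two_iff hP hi.1).mp hi.2⟩
  · rw [mem_coe, mem_filter] at hj ⊢
    refine ⟨h.inv_mem hj.1, (h.le_nxt_sub_two_iff hP (h.inv_mem hj.1)).mpr ?_⟩
    rw [h.apply_inv hj.1]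
    exact hj.2
  · exact h.inv_apply (mem_filter.mp hi).1
  · exact h.apply_inv (mem_filter.mp hj).1

end IsSchedule

/-- Moving the entry at position `q` to position `p + 1` sends position `j` to `moveTo p q j`;
the entry that ends at position `j` comes from position `moveFrom p q j`. -/
def moveTo (p q j : ℕ) : ℕ := if j = q then p + 1 else if p < j ∧ j < q then j + 1 else j

def moveFrom (p q j : ℕ) : ℕ := if j = p + 1 then q else if p + 1 < j ∧ j ≤ q then j - 1 else j

lemma moveTo_of_le {p q j : ℕ} (hpq : p < q) (hj : j ≤ p) : moveTo p q j = j := by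
  simp only [moveTo]
  split_ifs <;> omega

lemma changes_comp_moveFrom_le {α : Type*} [DecidableEq α] {f : ℕ → α} {a b p q : ℕ}
    (hpq : p < q) (hf : f q = f p) (ha : a ≤ p) (hb : q ≤ b) :
    changes (f ∘ moveFrom p q) a b ≤ changes f a b := by
  -- since `f q = f p`, the moved sequence is a monotone reindexing of `f`
  set s : ℕ → ℕ := fun j => if j ≤ p then j else if j ≤ q then j - 1 else j
  have hfs : f ∘ moveFrom p q = f ∘ s := by
    funext j
    simp only [Function.comp_apply, moveFrom, s]
    split_ifs <;> first | rfl | (exfalso; omega) | (congr 1; omega) | (rw [hf]; congr 1; omega)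
  have hs : Monotone s := fun j j' hjj' => by
    simp only [s]
    split_ifs <;> omega
  rw [hfs]
  refine (changes_comp_le hs (by omega)).trans (changes_mono f ?_ ?_) <;> simp only [s] <;>
    split_ifs <;> omega

lemma IsSchedule.comp_moveTo {σ τ : ℕ → ℕ} (h : IsSchedule k n σ τ) {m p : ℕ}
    (hm : m ∈ Icc 1 n) (hkp : k ≤ p) (hpq : p < σ m) (hmp : m ≤ p + 1) :
    IsSchedule k n (moveTo p (σ m) ∘ σ) (τ ∘ moveFrom p (σ m)) := by
  have hq := mem_Icc.mp (h.apply_mem hm)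
  refine h.comp (fun j hj => ?_) (fun j hj => ?_) (fun i hi => ?_)
  · simp only [mem_Icc, moveFrom, moveTo] at hj ⊢
    split_ifs <;> omega
  · simp only [mem_Icc, moveFrom, moveTo] at hj ⊢
    split_ifs <;> omega
  · have := h.le_apply hi
    simp only [moveTo]
    split_ifs with he
    · rwa [h.injOn hi hm he]
    all_goals omega

lemma SortedByColor.comp_moveTo {σ τ : ℕ → ℕ} (hs : SortedByColor n c σ)
    (h : IsSchedule k n σ τ) {i₀ : ℕ} (hi₀ : i₀ ∈ Icc 1 n) (hm : nxt k n c i₀ ∈ Icc 1 n) :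
    SortedByColor n c (moveTo (σ i₀) (σ (nxt k n c i₀)) ∘ σ) := by
  set m := nxt k n c i₀
  have hcm : c m = c i₀ := color_nxt (mem_Icc.mp hm).2
  have hi₀m : i₀ < m := lt_nxt (mem_Icc.mp hi₀).2
  have hpq : σ i₀ < σ m := hs i₀ hi₀ m hm hi₀m hcm.symm
  have hne : ∀ {j}, j ∈ Icc 1 n → j ≠ m → σ j ≠ σ m := fun hj hjm he => hjm (h.injOn hj hm he)
  intro i hi i' hi' hii' hc
  have hlt := hs i hi i' hi' hii' hc
  simp only [Function.comp_apply, moveTo]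
  by_cases him : i = m
  · have : σ i = σ m := by rw [him]
    have := hne hi' (by omega)
    split_ifs <;> omega
  by_cases hi'm : i' = m
  · -- no item of this colour lies strictly between `i₀` and `m`, so `i ≤ i₀`
    have hii₀ : i ≤ i₀ := not_lt.mp fun hgt =>
      (nxt_le_of_lt (k := k) hgt (mem_Icc.mp hi).2 (by rw [hc, hi'm, hcm])).not_gt (hi'm ▸ hii')
    have hσi : σ i ≤ σ i₀ := by
      rcases hii₀.lt_or_eq with hlt' | rfl
      · exact (hs i hi i₀ hi₀ hlt' (by rw [hc, hi'm, hcm])).le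
      · exact le_rfl
    have : σ i' = σ m := by rw [hi'm]
    have := hne hi him
    split_ifs <;> omega
  · have := hne hi him
    have := hne hi' hi'm
    split_ifs <;> omega

lemma FollowsUpBelow.comp_moveTo {σ τ : ℕ → ℕ} {i₀ : ℕ} (hP : FollowsUpBelow k n c σ (σ i₀))
    (h : IsSchedule k n σ τ) (hi₀ : i₀ ∈ Icc 1 n) (hpq : σ i₀ < σ (nxt k n c i₀)) :
    FollowsUpBelow k n c (moveTo (σ i₀) (σ (nxt k n c i₀)) ∘ σ) (σ i₀ + 1) := by
  intro i hi hlt hnxt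
  simp only [Function.comp_apply] at hlt hnxt ⊢
  have hip : σ i ≤ σ i₀ := by
    simp only [moveTo] at hlt
    split_ifs at hlt <;> omega
  rw [moveTo_of_le hpq hip] at hnxt ⊢
  rcases hip.lt_or_eq with hlt' | heq
  · rw [hP i hi hlt' hnxt, moveTo_of_le hpq hlt']
  · rw [h.injOn hi hi₀ heq, moveTo, if_pos rfl]

lemma IsSchedule.exists_followsUpBelow_succ {σ τ : ℕ → ℕ} (h : IsSchedule k n σ τ)
    (hs : SortedByColor n c σ) {p : ℕ} (hP : FollowsUpBelow k n c σ p) :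
    ∃ σ' τ', IsSchedule k n σ' τ' ∧ SortedByColor n c σ' ∧ FollowsUpBelow k n c σ' (p + 1) ∧
      changes (c ∘ τ') (k + 1) (k + n) ≤ changes (c ∘ τ) (k + 1) (k + n) := by
  by_cases hex : ∃ i₀ ∈ Icc 1 n, σ i₀ = p ∧ nxt k n c i₀ ≤ p + 1
  · obtain ⟨i₀, hi₀, rfl, hnxt⟩ := hex
    have hσi₀ := mem_Icc.mp (h.apply_mem hi₀)
    have hm := nxt_mem (k := k) (c := c) hi₀ (by omega)
    have hcm : c (τ (σ (nxt k n c i₀))) = c (τ (σ i₀)) := by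
      rw [h.inv_apply hm, h.inv_apply hi₀, color_nxt (mem_Icc.mp hm).2]
    have hpq : σ i₀ < σ (nxt k n c i₀) :=
      hs i₀ hi₀ _ hm (lt_nxt (mem_Icc.mp hi₀).2) (color_nxt (mem_Icc.mp hm).2).symm
    refine ⟨_, _, h.comp_moveTo hm (by omega) hpq hnxt, hs.comp_moveTo h hi₀ hm,
      hP.comp_moveTo h hi₀ hpq, ?_⟩
    exact changes_comp_moveFrom_le (f := c ∘ τ) (a := k + 1) hpq hcm (by omega)
      (mem_Icc.mp (h.apply_mem hm)).2
  · refine ⟨σ, τ, h, hs, fun i hi hlt hnxt => hP i hi ?_ hnxt, le_rfl⟩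
    exact (Nat.lt_succ_iff.mp hlt).lt_of_ne fun he => hex ⟨i, hi, he, he ▸ hnxt⟩

lemma IsSchedule.exists_followsUp {σ τ : ℕ → ℕ} (h : IsSchedule k n σ τ)
    (hs : SortedByColor n c σ) :
    ∃ σ' τ', IsSchedule k n σ' τ' ∧ FollowsUp k n c σ' ∧
      changes (c ∘ τ') (k + 1) (k + n) ≤ changes (c ∘ τ) (k + 1) (k + n) := by
  have key : ∀ p, ∃ σ' τ', IsSchedule k n σ' τ' ∧ SortedByColor n c σ' ∧
      FollowsUpBelow k n c σ' p ∧
      changes (c ∘ τ') (k + 1) (k + n) ≤ changes (c ∘ τ) (k + 1) (k + n) := by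
    intro p
    induction p with
    | zero => exact ⟨σ, τ, h, hs, fun i _ hi => absurd hi (Nat.not_lt_zero _), le_rfl⟩
    | succ p ih =>
      obtain ⟨σ', τ', h', hs', hP', hc'⟩ := ih
      obtain ⟨σ'', τ'', h'', hs'', hP'', hc''⟩ := h'.exists_followsUpBelow_succ hs' hP'
      exact ⟨σ'', τ'', h'', hs'', hP'', hc''.trans hc'⟩
  obtain ⟨σ', τ', h', -, hP', hc'⟩ := key (k + n + 1)
  refine ⟨σ', τ', h', fun i hi => hP' i hi ?_, hc'⟩
  have := mem_Icc.mp (h'.apply_mem hi)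
  omega

noncomputable def assignment (n : ℕ) (σ : ℕ → ℕ) : ℕ → ℕ → ℝ :=
  fun i j => if i ∈ Icc 1 n ∧ σ i = j then 1 else 0

section Assignment

variable {σ : ℕ → ℕ}

lemma assignment_eq_zero_or_one (i j : ℕ) : assignment n σ i j = 0 ∨ assignment n σ i j = 1 := by
  unfold assignment
  split_ifs <;> simp

lemma sum_assignment_row {i : ℕ} (hi : i ∈ Icc 1 n) (s : Finset ℕ) :
    ∑ j ∈ s, assignment n σ i j = if σ i ∈ s then 1 else 0 := by
  simp [assignment, hi]

lemma sum_assignment_col (s : Finset ℕ) (j : ℕ) :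
    ∑ i ∈ s, assignment n σ i j = #{i ∈ s | i ∈ Icc 1 n ∧ σ i = j} := by
  simp only [assignment, sum_boole]

lemma sum_eq_card_of_eq_zero_or_one {ι : Type*} {s : Finset ι} {f : ι → ℝ}
    (hf : ∀ a ∈ s, f a = 0 ∨ f a = 1) : ∑ a ∈ s, f a = #{a ∈ s | f a = 1} := by
  rw [← sum_boole]
  exact sum_congr rfl fun a ha => by rcases hf a ha with h | h <;> simp [h]

lemma exists_eq_assignment {x : ℕ → ℕ → ℝ} (hx : Feasible k n c x)
    (h01 : ∀ i j, x i j = 0 ∨ x i j = 1) : ∃ σ, x = assignment n σ := by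
  obtain ⟨hsupp, hrow, -, -, -⟩ := hx
  have hone : ∀ i ∈ Icc 1 n, ∃ j, {j ∈ Icc (max i (k + 1)) (k + n) | x i j = 1} = {j} :=
    fun i hi => by
      rw [← card_eq_one, ← Nat.cast_inj (R := ℝ), Nat.cast_one,
        ← sum_eq_card_of_eq_zero_or_one fun j _ => h01 i j]
      exact hrow i (mem_Icc.mp hi).1 (mem_Icc.mp hi).2
  choose! σ hσ using hone
  refine ⟨σ, funext fun i => funext fun j => ?_⟩
  unfold assignment
  by_cases hi : i ∈ Icc 1 n
  · have hmem := Finset.ext_iff.mp (hσ i hi) j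
    simp only [mem_filter, mem_singleton] at hmem
    by_cases hj : σ i = j
    · rw [if_pos ⟨hi, hj⟩]
      exact (hmem.mpr hj.symm).2
    rw [if_neg fun h' => hj h'.2]
    by_cases hj' : j ∈ Icc (max i (k + 1)) (k + n)
    · exact (h01 i j).resolve_right fun h' => hj (hmem.mp ⟨hj', h'⟩).symm
    · exact hsupp i j fun ⟨h₁, h₂, h₃, h₄⟩ => hj' (mem_Icc.mpr ⟨h₃, h₄⟩)
  · rw [if_neg fun h' => hi h'.1]
    exact hsupp i j fun ⟨h₁, h₂, _⟩ => hi (mem_Icc.mpr ⟨h₁, h₂⟩)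

lemma Feasible.exists_isSchedule (hx : Feasible k n c (assignment n σ)) :
    ∃ τ, IsSchedule k n σ τ := by
  obtain ⟨-, hrow, hcol, -, -⟩ := hx
  have hσ : ∀ i ∈ Icc 1 n, σ i ∈ Icc (max i (k + 1)) (k + n) := fun i hi => by
    have := hrow i (mem_Icc.mp hi).1 (mem_Icc.mp hi).2
    rw [sum_assignment_row hi] at this
    exact of_not_not fun h' => by simp [h'] at this
  have hcard : ∀ j ∈ Icc (k + 1) (k + n), #{i ∈ Icc 1 (min j n) | i ∈ Icc 1 n ∧ σ i = j} = 1 :=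
    fun j hj => by
      have := hcol j (mem_Icc.mp hj).1 (mem_Icc.mp hj).2
      rwa [sum_assignment_col, Nat.cast_eq_one] at this
  have hσ' : ∀ i ∈ Icc 1 n, k + 1 ≤ σ i ∧ i ≤ σ i ∧ σ i ≤ k + n := fun i hi => by
    have := mem_Icc.mp (hσ i hi)
    omega
  have hinj : Set.InjOn σ (Icc 1 n) := fun a ha b hb hab => by
    have ha' := mem_Icc.mp ha
    have hb' := mem_Icc.mp hb
    have ha'' := hσ' a ha
    have hb'' := hσ' b hb
    exact card_le_one.mp (hcard (σ a) (mem_Icc.mpr ⟨ha''.1, ha''.2.2⟩)).le a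
      (mem_filter.mpr ⟨mem_Icc.mpr ⟨ha'.1, le_min ha''.2.1 ha'.2⟩, ha, rfl⟩) b
      (mem_filter.mpr ⟨mem_Icc.mpr ⟨hb'.1, le_min (hab ▸ hb''.2.1) hb'.2⟩, hb, hab.symm⟩)
  have hsurj : ∀ j ∈ Icc (k + 1) (k + n), ∃ i ∈ (Icc 1 n : Set ℕ), σ i = j := fun j hj => by
    obtain ⟨i, hi⟩ := card_pos.mp ((hcard j hj).symm ▸ Nat.one_pos)
    exact ⟨i, (mem_filter.mp hi).2.1, (mem_filter.mp hi).2.2⟩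
  refine ⟨Function.invFunOn σ (Icc 1 n), fun i hi => ?_, fun j hj => ?_⟩
  · have := hσ' i hi
    exact ⟨mem_Icc.mpr ⟨this.1, this.2.2⟩, this.2.1, hinj.leftInvOn_invFunOn hi⟩
  · exact Function.invFunOn_pos (hsurj j hj)

lemma Feasible.followsUp {τ : ℕ → ℕ} (hx : Feasible k n c (assignment n σ))
    (h : IsSchedule k n σ τ) : FollowsUp k n c σ := by
  intro i hi hnxt
  have hσi := mem_Icc.mp (h.apply_mem hi)
  have hnm := nxt_mem (k := k) (c := c) hi (by omega)
  obtain ⟨-, -, -, hchain, -⟩ := hx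
  have := hchain i (mem_Icc.mp hi).1 (mem_Icc.mp hi).2 (mem_Icc.mp hnm).2 (σ i + 1) hnxt
  unfold assignment at this
  rw [Nat.add_sub_cancel, if_pos (show i ∈ Icc 1 n ∧ σ i = σ i from ⟨hi, rfl⟩)] at this
  by_contra hne
  rw [if_neg fun h' => hne h'.2] at this
  norm_num at this

lemma IsSchedule.feasible_assignment {τ : ℕ → ℕ} (h : IsSchedule k n σ τ)
    (hP : FollowsUp k n c σ) : Feasible k n c (assignment n σ) := by
  refine ⟨fun i j hij => ?_, fun i h₁ h₂ => ?_, fun j h₁ h₂ => ?_, fun i h₁ h₂ hn j hj => ?_,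
    fun i j => ?_⟩
  · refine if_neg fun ⟨hi, hσi⟩ => hij ?_
    have := mem_Icc.mp hi
    have := mem_Icc.mp (h.apply_mem hi)
    have := h.le_apply hi
    exact ⟨by omega, by omega, by omega, by omega⟩
  · have hi : i ∈ Icc 1 n := mem_Icc.mpr ⟨h₁, h₂⟩
    have := mem_Icc.mp (h.apply_mem hi)
    have := h.le_apply hi
    rw [sum_assignment_row hi, if_pos (mem_Icc.mpr ⟨by omega, by omega⟩)]
  · have hj : j ∈ Icc (k + 1) (k + n) := mem_Icc.mpr ⟨h₁, h₂⟩
    rw [sum_assignment_col, Nat.cast_eq_one, card_eq_one]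
    refine ⟨τ j, eq_singleton_iff_unique_mem.mpr ⟨?_, fun i hi => ?_⟩⟩
    · have hτ := mem_Icc.mp (h.inv_mem hj)
      have hle := h.le_apply (h.inv_mem hj)
      rw [h.apply_inv hj] at hle
      simp only [mem_filter, mem_Icc, h.apply_inv hj, and_true]
      omega
    · have hi' := mem_filter.mp hi
      rw [← hi'.2.2, h.inv_apply hi'.2.1]
  · have hi : i ∈ Icc 1 n := mem_Icc.mpr ⟨h₁, h₂⟩
    unfold assignment
    by_cases hσi : σ i = j - 1
    · have := lt_nxt (k := k) (c := c) h₂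
      rw [if_pos (show i ∈ Icc 1 n ∧ σ i = j - 1 from ⟨hi, hσi⟩),
        if_pos ⟨nxt_mem (k := k) (c := c) hi (by omega), by rw [hP i hi (by omega)]; omega⟩]
      norm_num
    · rw [if_neg (show ¬(i ∈ Icc 1 n ∧ σ i = j - 1) from fun h' => hσi h'.2)]
      split_ifs <;> norm_num
  · unfold assignment
    split_ifs <;> norm_num

lemma IsSchedule.cost_assignment {τ : ℕ → ℕ} (h : IsSchedule k n σ τ) :
    cost k n c (assignment n σ) = #{i ∈ Icc 1 n | σ i ≤ nxt k n c i - 2} := by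
  rw [cost, ← sum_boole]
  refine sum_congr rfl fun i hi => ?_
  have := mem_Icc.mp (h.apply_mem hi)
  have := h.le_apply hi
  rw [sum_assignment_row hi]
  exact if_congr (by simp only [mem_Icc]; omega) rfl rfl

end Assignment

end

open scoped Classical in
theorem stmt0_general (k n : ℕ) (hn : 1 ≤ n) (c : ℕ → ℕ) :
    sInf {z : ℝ | ∃ x : ℕ → ℕ → ℝ, Feasible k n c x ∧
        (∀ i j, x i j = 0 ∨ x i j = 1) ∧ z = cost k n c x}
    = sInf {z : ℝ | ∃ σ τ : ℕ → ℕ,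
        (∀ i ∈ Finset.Icc 1 n, σ i ∈ Finset.Icc (k+1) (k+n) ∧ i ≤ σ i ∧ τ (σ i) = i) ∧
        (∀ j ∈ Finset.Icc (k+1) (k+n), τ j ∈ Finset.Icc 1 n ∧ σ (τ j) = j) ∧
        z = 1 + (((Finset.Icc (k+1) (k+n-1)).filter
              (fun j => c (τ j) ≠ c (τ (j+1)))).card : ℝ)} := by
  have hchanges : ∀ τ : ℕ → ℕ, #{j ∈ Icc (k + 1) (k + n - 1) | c (τ j) ≠ c (τ (j + 1))} =
      changes (c ∘ τ) (k + 1) (k + n) := fun τ => by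
    rw [changes, ← Ico_add_one_right_eq_Icc, Nat.sub_add_cancel (by omega)]
    rfl
  have hcost : ∀ σ τ, IsSchedule k n σ τ → FollowsUp k n c σ →
      cost k n c (assignment n σ) = 1 + (changes (c ∘ τ) (k + 1) (k + n) : ℝ) :=
    fun σ τ h hP => by
      rw [h.cost_assignment, h.card_filter_le_nxt_sub_two hP hn]
      push_cast
      ring
  refine csInf_eq_csInf_of_forall_exists_le ?_ ?_
  · rintro _ ⟨x, hx, h01, rfl⟩
    obtain ⟨σ, rfl⟩ := exists_eq_assignment hx h01
    obtain ⟨τ, h⟩ := hx.exists_isSchedule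
    exact ⟨_, ⟨σ, τ, h.1, h.2, by rw [hchanges, hcost σ τ h (hx.followsUp h)]⟩, le_rfl⟩
  · rintro _ ⟨σ, τ, h₁, h₂, rfl⟩
    obtain ⟨σ₁, τ₁, h₁', hs₁, hc₁⟩ := IsSchedule.exists_sortedByColor ⟨h₁, h₂⟩ c
    obtain ⟨σ₂, τ₂, h₂', hP₂, hle⟩ := h₁'.exists_followsUp hs₁
    refine ⟨_, ⟨assignment n σ₂, h₂'.feasible_assignment hP₂, assignment_eq_zero_or_one, rfl⟩, ?_⟩
    rw [hcost σ₂ τ₂ h₂' hP₂, hchanges, ← hc₁]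
    exact add_le_add_right (Nat.cast_le.mpr hle) 1

open scoped Classical in
theorem stmt0 (k n : ℕ) (hk : 1 ≤ k) (hn : 1 ≤ n) (c : ℕ → ℕ) :
    sInf {z : ℝ | ∃ x : ℕ → ℕ → ℝ, Feasible k n c x ∧
        (∀ i j, x i j = 0 ∨ x i j = 1) ∧ z = cost k n c x}
    = sInf {z : ℝ | ∃ σ τ : ℕ → ℕ,
        (∀ i ∈ Finset.Icc 1 n, σ i ∈ Finset.Icc (k+1) (k+n) ∧ i ≤ σ i ∧ τ (σ i) = i) ∧
        (∀ j ∈ Finset.Icc (k+1) (k+n), τ j ∈ Finset.Icc 1 n ∧ σ (τ j) = j) ∧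
        z = 1 + (((Finset.Icc (k+1) (k+n-1)).filter
              (fun j => c (τ j) ≠ c (τ (j+1)))).card : ℝ)} :=
  stmt0_general k n hn c
end

section
/- For every feasible fractional solution x, every item i with i ≠ last(i), and every time j with n(i) − 1 ≤ j ≤ k+n, it holds that w_i^j ≤ w_{n(i)}^j. -/
open Finset

/-- The weight equals the tail sum. -/
lemma weight_eq_tail (k n : ℕ) (c : ℕ → ℕ) (x : ℕ → ℕ → ℝ) (hx : Feasible k n c x)
    (a : ℕ) (ha1 : 1 ≤ a) (ha2 : a ≤ n) (j : ℕ) (hj : j ≤ k + n) :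
    weight k x a j = ∑ j' ∈ Finset.Icc (j+1) (k+n), x a j' := by
  obtain ⟨hzero, hsum, -, -, -⟩ := hx
  have hs1 : (1:ℕ) ≤ max a (k+1) := le_trans ha1 (le_max_left _ _)
  have key : ∑ j' ∈ Finset.Icc (max a (k+1)) j, x a j'
      + ∑ j' ∈ Finset.Icc (j+1) (k+n), x a j' = 1 := by
    rcases le_or_gt (max a (k+1)) j with hle | hlt
    · rw [← hsum a ha1 ha2]
      have h1 : Finset.Icc (max a (k+1)) j = Finset.Ioc (max a (k+1) - 1) j := by
        rw [← Finset.Icc_add_one_left_eq_Ioc]; congr 1; omega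
      have h2 : Finset.Icc (j+1) (k+n) = Finset.Ioc j (k+n) := Finset.Icc_add_one_left_eq_Ioc j (k+n)
      have h3 : Finset.Icc (max a (k+1)) (k+n) = Finset.Ioc (max a (k+1) - 1) (k+n) := by
        rw [← Finset.Icc_add_one_left_eq_Ioc]; congr 1; omega
      rw [h1, h2, h3]
      exact Finset.sum_Ioc_consecutive _ (by omega) hj
    · have he : Finset.Icc (max a (k+1)) j = ∅ := Finset.Icc_eq_empty (by omega)
      rw [he, Finset.sum_empty, zero_add, ← hsum a ha1 ha2]
      refine (Finset.sum_subset ?_ ?_).symm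
      · intro t ht
        rw [Finset.mem_Icc] at ht ⊢
        omega
      · intro t ht hnt
        rw [Finset.mem_Icc] at ht hnt
        exact hzero a t (by omega)
  unfold weight
  linarith

/-- Proposition 3 (monotonicity of weights): for every feasible fractional solution `x`,
every item `i` that is not the last of its color, and every time `j` with
`n(i) - 1 ≤ j ≤ k + n`, we have `w_i^j ≤ w_{n(i)}^j`. -/
theorem stmt2 (k n : ℕ) (hk : 1 ≤ k) (hn : 1 ≤ n) (c : ℕ → ℕ) (x : ℕ → ℕ → ℝ)
    (hx : Feasible k n c x) (i : ℕ) (hi1 : 1 ≤ i) (hi2 : i ≤ n)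
    (hlast : nxt k n c i ≤ n)
    (j : ℕ) (hj1 : nxt k n c i - 1 ≤ j) (hj2 : j ≤ k + n) :
    weight k x i j ≤ weight k x (nxt k n c i) j := by
  classical
  obtain ⟨m, hmdef⟩ : ∃ m, nxt k n c i = m := ⟨_, rfl⟩
  have hmi : i < m := by
    by_cases hex : ∃ i', (i < i' ∧ i' ≤ n) ∧ c i' = c i
    · have h1 : nxt k n c i = Nat.find hex := by rw [nxt, dif_pos hex]
      have := Nat.find_spec hex
      omega
    · have h1 : nxt k n c i = k + n + 2 := by rw [nxt, dif_neg hex]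
      omega
  have hm1 : 1 ≤ m := by omega
  obtain ⟨hzero, hsum, hcap, hmono, hnonneg⟩ := hx
  have hmono' := hmono i hi1 hi2
  rw [hmdef] at hmono' hlast hj1 ⊢
  rw [weight_eq_tail k n c x ⟨hzero, hsum, hcap, hmono, hnonneg⟩ i hi1 hi2 j hj2,
      weight_eq_tail k n c x ⟨hzero, hsum, hcap, hmono, hnonneg⟩ m hm1 hlast j hj2]
  have step1 : ∑ j' ∈ Finset.Icc (j+1) (k+n), x i j'
      ≤ ∑ j' ∈ Finset.Icc (j+1) (k+n), x m (j'+1) := by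
    apply Finset.sum_le_sum
    intro t ht
    simp only [Finset.mem_Icc] at ht
    have hc : m ≤ t + 1 := by omega
    have := hmono' hlast (t+1) hc
    have ht1 : t + 1 - 1 = t := by omega
    rw [ht1] at this
    linarith
  have step2 : ∑ j' ∈ Finset.Icc (j+1) (k+n), x m (j'+1)
      = ∑ j' ∈ Finset.Icc (j+2) (k+n+1), x m j' := by
    have hmap : Finset.Icc (j+2) (k+n+1)
        = Finset.map (addRightEmbedding 1) (Finset.Icc (j+1) (k+n)) := by
      rw [Finset.map_add_right_Icc]
    rw [hmap, Finset.sum_map]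
    simp [addRightEmbedding_apply]
  have step3 : ∑ j' ∈ Finset.Icc (j+2) (k+n+1), x m j'
      = ∑ j' ∈ Finset.Icc (j+2) (k+n), x m j' := by
    refine (Finset.sum_subset ?_ ?_).symm
    · intro t ht
      rw [Finset.mem_Icc] at ht ⊢
      omega
    · intro t ht hnt
      rw [Finset.mem_Icc] at ht hnt
      exact hzero m t (by omega)
  have step4 : ∑ j' ∈ Finset.Icc (j+2) (k+n), x m j'
      ≤ ∑ j' ∈ Finset.Icc (j+1) (k+n), x m j' := by
    apply Finset.sum_le_sum_of_subset_of_nonneg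
    · intro t ht; simp only [Finset.mem_Icc] at *; omega
    · intro t _ _; exact hnonneg m t
  linarith
end

section
/- For every feasible fractional solution x, all items i < i' with c(i) = c(i'), and every time j with i' − 1 ≤ j ≤ k+n, it holds that w_i^j ≤ w_{i'}^j; in particular, among the items of one color present in the buffer, every later item has weight at least that of the earliest item of that color. -/
open Finset

/-!
Write `w_i^j` as the tail mass `∑_{j < j' ≤ k+n} x_{i,j'}` still to be evicted after time `j`.
If `i' = n(i)`, constraint (3) says `x_{i,j'} ≤ x_{i',j'+1}`, so shifting the tail of `i` by one
step is dominated by the tail of `i'`; the general case follows along the chain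
`i, n(i), n(n(i)), …` of items of one color.
-/

theorem Finset.sum_Ioc_le_sum_Ioc_of_le_shift {M : Type*} [AddCommMonoid M] [PartialOrder M]
    [IsOrderedAddMonoid M] {f g : ℕ → M} {a b : ℕ} (hab : a ≤ b)
    (hfg : ∀ t ∈ Ioc a b, f t ≤ g (t + 1)) (hg : ∀ t, 0 ≤ g t) (hgb : g (b + 1) = 0) :
    ∑ t ∈ Ioc a b, f t ≤ ∑ t ∈ Ioc a b, g t :=
  calc ∑ t ∈ Ioc a b, f t
      ≤ ∑ t ∈ Ioc a b, g (t + 1) := sum_le_sum hfg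
    _ = ∑ t ∈ Ioc (a + 1) (b + 1), g t := by
        rw [← Finset.map_add_right_Ioc, sum_map]; rfl
    _ ≤ ∑ t ∈ Ioc a (b + 1), g t :=
        sum_le_sum_of_subset_of_nonneg (Ioc_subset_Ioc_left a.le_succ) fun t _ _ => hg t
    _ = ∑ t ∈ Ioc a b, g t := by rw [sum_Ioc_succ_top hab, hgb, add_zero]

theorem nxt_spec {k n : ℕ} {c : ℕ → ℕ} {i i' : ℕ} (hii' : i < i') (hi' : i' ≤ n)
    (hc : c i = c i') :
    i < nxt k n c i ∧ nxt k n c i ≤ i' ∧ c (nxt k n c i) = c i := by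
  have hex : ∃ m, (i < m ∧ m ≤ n) ∧ c m = c i := ⟨i', ⟨hii', hi'⟩, hc.symm⟩
  have hspec := Nat.find_spec hex
  rw [nxt, dif_pos hex]
  exact ⟨hspec.1.1, Nat.find_min' hex ⟨⟨hii', hi'⟩, hc.symm⟩, hspec.2⟩

namespace Feasible

variable {k n : ℕ} {c : ℕ → ℕ} {x : ℕ → ℕ → ℝ}

theorem sum_Icc_eq_sum_Ioc_zero (hx : Feasible k n c x) (i b : ℕ) :
    ∑ t ∈ Icc (max i (k + 1)) b, x i t = ∑ t ∈ Ioc 0 b, x i t := by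
  apply sum_subset
  · intro t ht
    simp only [mem_Icc, mem_Ioc] at ht ⊢
    omega
  · intro t ht hnt
    apply hx.1
    simp only [mem_Icc, mem_Ioc] at ht hnt
    omega

theorem weight_eq_sum_Ioc (hx : Feasible k n c x) {i j : ℕ} (hi1 : 1 ≤ i) (hin : i ≤ n)
    (hj : j ≤ k + n) :
    weight k x i j = ∑ t ∈ Ioc j (k + n), x i t := by
  have htotal := hx.2.1 i hi1 hin
  rw [hx.sum_Icc_eq_sum_Ioc_zero, ← sum_Ioc_consecutive _ j.zero_le hj] at htotal
  rw [weight, hx.sum_Icc_eq_sum_Ioc_zero]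
  linarith

theorem weight_le_weight_nxt (hx : Feasible k n c x) {i j : ℕ} (hi1 : 1 ≤ i) (hin : i ≤ n)
    (hnxt : nxt k n c i ≤ n) (hi_lt : i < nxt k n c i) (hnxt_j : nxt k n c i ≤ j + 1)
    (hj : j ≤ k + n) :
    weight k x i j ≤ weight k x (nxt k n c i) j := by
  rw [hx.weight_eq_sum_Ioc hi1 hin hj, hx.weight_eq_sum_Ioc (by omega) hnxt hj]
  refine sum_Ioc_le_sum_Ioc_of_le_shift hj (fun t ht => ?_) (hx.2.2.2.2 _)
    (hx.1 _ _ (by omega))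
  have h := hx.2.2.2.1 i hi1 hin hnxt (t + 1) (by simp only [mem_Ioc] at ht; omega)
  rw [Nat.add_sub_cancel] at h
  linarith

theorem weight_le_weight_of_color_eq (hx : Feasible k n c x) {j : ℕ} (hj : j ≤ k + n)
    {i i' : ℕ} (hi1 : 1 ≤ i) (hii' : i < i') (hi' : i' ≤ n) (hc : c i = c i')
    (hi'j : i' ≤ j + 1) :
    weight k x i j ≤ weight k x i' j := by
  induction hd : i' - i using Nat.strong_induction_on generalizing i with
  | _ d ih =>
    obtain ⟨hi_lt, hnxt_le, hc_nxt⟩ := nxt_spec (k := k) hii' hi' hc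
    have hstep := hx.weight_le_weight_nxt hi1 (by omega) (by omega) hi_lt (by omega) hj
    rcases hnxt_le.eq_or_lt with heq | hlt
    · rwa [heq] at hstep
    · exact hstep.trans <|
        ih _ (by omega) (by omega) hlt (hc_nxt.trans hc) rfl

end Feasible

theorem stmt3_general (k n : ℕ) (c : ℕ → ℕ) (x : ℕ → ℕ → ℝ)
    (hx : Feasible k n c x) (i i' : ℕ) (hi1 : 1 ≤ i) (hii' : i < i') (hi'2 : i' ≤ n)
    (hcol : c i = c i')
    (j : ℕ) (hj1 : i' - 1 ≤ j) (hj2 : j ≤ k + n) :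
    weight k x i j ≤ weight k x i' j :=
  hx.weight_le_weight_of_color_eq hj2 hi1 hii' hi'2 hcol (by omega)

/-- For every feasible fractional solution `x`, all items `i < i'` of the same color,
and every time `j` with `i' - 1 ≤ j ≤ k + n`, it holds that `w_i^j ≤ w_{i'}^j`;
in particular, among the items of one color in the buffer, every later item has weight
at least that of the earliest item of that color. -/
theorem stmt3 (k n : ℕ) (hk : 1 ≤ k) (hn : 1 ≤ n) (c : ℕ → ℕ) (x : ℕ → ℕ → ℝ)
    (hx : Feasible k n c x) (i i' : ℕ) (hi1 : 1 ≤ i) (hii' : i < i') (hi'2 : i' ≤ n)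
    (hcol : c i = c i')
    (j : ℕ) (hj1 : i' - 1 ≤ j) (hj2 : j ≤ k + n) :
    weight k x i j ≤ weight k x i' j :=
  stmt3_general k n c x hx i i' hi1 hii' hi'2 hcol j hj1 hj2
end

section
/- For every feasible fractional solution x, the cost satisfies z(x) ≥ |C|, where |C| is the number of distinct colors appearing in the input sequence. In particular z(x) ≥ 1. -/
/-!
The cost of `x` contains, for the last item `i` of each color, the whole row
`∑_{j ≥ max i (k+1)} x i j`, which is `1` by feasibility: such an item has `n(i) - 2 = k + n`.
Every color has a last item, so the cost is at least the number of colors.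
-/

open Finset

noncomputable def lastItems (k n : ℕ) (c : ℕ → ℕ) : Finset ℕ :=
  (Icc 1 n).filter fun i => nxt k n c i = k + n + 2

lemma nxt_eq_of_forall_ne {k n : ℕ} {c : ℕ → ℕ} {i : ℕ}
    (h : ∀ i', i < i' → i' ≤ n → c i' ≠ c i) : nxt k n c i = k + n + 2 := by
  rw [nxt, dif_neg]
  rintro ⟨i', ⟨hlt, hle⟩, hc⟩
  exact h i' hlt hle hc

lemma exists_mem_lastItems_color_eq {k n : ℕ} {c : ℕ → ℕ} {i : ℕ} (hi : i ∈ Icc 1 n) :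
    ∃ i₀ ∈ lastItems k n c, c i₀ = c i := by
  set T := (Icc 1 n).filter fun j => c j = c i
  have hT : T.Nonempty := ⟨i, mem_filter.mpr ⟨hi, rfl⟩⟩
  obtain ⟨hmaxIcc, hmaxc⟩ := mem_filter.mp (T.max'_mem hT)
  refine ⟨T.max' hT, mem_filter.mpr ⟨hmaxIcc, nxt_eq_of_forall_ne ?_⟩, hmaxc⟩
  intro i' hlt hle hc
  have hi'T : i' ∈ T := by
    refine mem_filter.mpr ⟨mem_Icc.mpr ⟨?_, hle⟩, hc.trans hmaxc⟩
    have := (mem_Icc.mp hmaxIcc).1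
    omega
  exact absurd (T.le_max' i' hi'T) (not_le.mpr hlt)

lemma image_lastItems (k n : ℕ) (c : ℕ → ℕ) :
    (lastItems k n c).image c = (Icc 1 n).image c := by
  refine Subset.antisymm (image_subset_image (filter_subset _ _)) ?_
  intro a ha
  obtain ⟨i, hi, rfl⟩ := mem_image.mp ha
  obtain ⟨i₀, hi₀, hc⟩ := exists_mem_lastItems_color_eq (k := k) hi
  exact mem_image.mpr ⟨i₀, hi₀, hc⟩

lemma card_lastItems_le_cost {k n : ℕ} {c : ℕ → ℕ} {x : ℕ → ℕ → ℝ} (hx : Feasible k n c x) :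
    ((lastItems k n c).card : ℝ) ≤ cost k n c x := by
  obtain ⟨-, hrow, -, -, hnonneg⟩ := hx
  have hone : ∀ i ∈ lastItems k n c,
      ∑ j ∈ Icc (max i (k + 1)) (nxt k n c i - 2), x i j = 1 := by
    intro i hi
    obtain ⟨hiIcc, hlast⟩ := mem_filter.mp hi
    obtain ⟨hi1, hin⟩ := mem_Icc.mp hiIcc
    rw [hlast, show k + n + 2 - 2 = k + n by omega]
    exact hrow i hi1 hin
  calc ((lastItems k n c).card : ℝ)
      = ∑ i ∈ lastItems k n c, ∑ j ∈ Icc (max i (k + 1)) (nxt k n c i - 2), x i j := by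
        rw [sum_congr rfl hone, sum_const, nsmul_one]
    _ ≤ cost k n c x :=
        sum_le_sum_of_subset_of_nonneg (filter_subset _ _)
          fun i _ _ => sum_nonneg fun j _ => hnonneg i j

theorem stmt8_general (k n : ℕ) (hn : 1 ≤ n) (c : ℕ → ℕ) (x : ℕ → ℕ → ℝ)
    (hx : Feasible k n c x) :
    (((Finset.Icc 1 n).image c).card : ℝ) ≤ cost k n c x ∧ (1 : ℝ) ≤ cost k n c x := by
  have hcolors : (((Icc 1 n).image c).card : ℝ) ≤ cost k n c x := by
    rw [← image_lastItems k n c]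
    exact (Nat.cast_le.mpr card_image_le).trans (card_lastItems_le_cost hx)
  have hpos : 1 ≤ ((Icc 1 n).image c).card :=
    card_pos.mpr ⟨c 1, mem_image.mpr ⟨1, mem_Icc.mpr ⟨le_rfl, hn⟩, rfl⟩⟩
  exact ⟨hcolors, le_trans (by exact_mod_cast hpos) hcolors⟩

/-- For every feasible fractional solution `x`, the cost satisfies `z(x) ≥ |C|`, where
`|C|` is the number of distinct colors appearing in the input sequence.
In particular `z(x) ≥ 1`. -/
theorem stmt8 (k n : ℕ) (hk : 1 ≤ k) (hn : 1 ≤ n) (c : ℕ → ℕ) (x : ℕ → ℕ → ℝ)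
    (hx : Feasible k n c x) :
    (((Finset.Icc 1 n).image c).card : ℝ) ≤ cost k n c x ∧ (1 : ℝ) ≤ cost k n c x :=
  stmt8_general k n hn c x hx
end

section
/- Let x be a feasible fractional solution with an MSM decomposition λ, let δ₃ ∈ (0,1), and let q ≥ 1 be an integer with q·δ₃ ≤ z(x). Then for every time j with t_{q−1} < j ≤ t_q, the total weight of MSMs started before time j whose matched interval reaches t_q satisfies Σ{λ_{I,j'} : M_{I,j'} is an MSM with j' < j and j' + |I| ≥ t_q} ≥ 1 − δ₃. -/
open Finset

/-- The `s`-th item (0-based) of the chain of same-color items starting at item `i`: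
`i, n(i), n(n(i)), …`. -/
noncomputable def chainItem (k n : ℕ) (c : ℕ → ℕ) (i s : ℕ) : ℕ := (nxt k n c)^[s] i

/-- `IsMSM k n c i m j` says that the maximal sequence `I = (i_1,…,i_m)` of consecutive
same-color items starting at `i_1 = i` (so `i_{s+1} = n(i_s)`), matched by
`M_{I,j}(i_s) = j + s`, is a monochromatic sequence matching (MSM): all items are genuine
input items, `j + s ≥ i_s` for all `s`, and `j + m < n(i_m) - 1`. -/
def IsMSM (k n : ℕ) (c : ℕ → ℕ) (i m j : ℕ) : Prop :=
  1 ≤ i ∧ 1 ≤ m ∧ k ≤ j ∧ j + m ≤ k + n ∧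
  (∀ s, s < m → chainItem k n c i s ≤ n) ∧
  (∀ s, s < m → chainItem k n c i s ≤ j + s + 1) ∧
  j + m + 1 < nxt k n c (chainItem k n c i (m - 1))

/-- The (finite) index set of candidate MSM triples `(i, m, j)`:
first item `i`, length `m`, start time `j`. -/
def msmTriples (k n : ℕ) : Finset (ℕ × ℕ × ℕ) :=
  (Finset.Icc 1 n) ×ˢ (Finset.Icc 1 n) ×ˢ (Finset.Icc k (k + n))

open scoped Classical in
/-- `lam` is an MSM decomposition of `x`: a family of nonnegative reals indexed by MSMs
such that for every item `i` and time `t`,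
`x_{i,t} = Σ { λ_{I,j} : M_{I,j} is an MSM with i ∈ I and M_{I,j}(i) = t }`. -/
def IsMSMDecomp (k n : ℕ) (c : ℕ → ℕ) (x : ℕ → ℕ → ℝ) (lam : ℕ × ℕ × ℕ → ℝ) : Prop :=
  (∀ p, 0 ≤ lam p) ∧
  (∀ p, ¬(p ∈ msmTriples k n ∧ IsMSM k n c p.1 p.2.1 p.2.2) → lam p = 0) ∧
  (∀ i t, 1 ≤ i → i ≤ n →
    x i t = ∑ p ∈ (msmTriples k n).filter
        (fun p => IsMSM k n c p.1 p.2.1 p.2.2 ∧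
          ∃ s, s < p.2.1 ∧ chainItem k n c p.1 s = i ∧ p.2.2 + s + 1 = t),
      lam p)

/-- `y_{i,j}`: equals `x_{i,j}` if `n(i) > j + 1`, and `0` otherwise. -/
noncomputable def yval (k n : ℕ) (c : ℕ → ℕ) (x : ℕ → ℕ → ℝ) (i j : ℕ) : ℝ :=
  if j + 1 < nxt k n c i then x i j else 0

/-- `F(t) = Σ_{j=k+1}^{t} Σ_{i ≤ j} y_{i,j}`, the cost accumulated by `x` up to time `t`. -/
noncomputable def Fval (k n : ℕ) (c : ℕ → ℕ) (x : ℕ → ℕ → ℝ) (t : ℕ) : ℝ :=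
  ∑ j ∈ Finset.Icc (k+1) t, ∑ i ∈ Finset.Icc 1 j, yval k n c x i j

/-!
By the column constraints, the MSMs whose matched interval covers a time `j ≤ k + n` have
total weight `1`; and since `y` keeps only the last item
of an MSM, `F(t)` is the total weight of the MSMs ending by time `t`. The MSMs covering `j` but
ending before `t_q` end in `(t_{q-1}, t_q - 1]`, so their weight is at most
`F(t_q - 1) - F(t_{q-1}) < q δ₃ - (q - 1) δ₃ = δ₃`, by minimality of `t_q`.
-/

section

variable {k n : ℕ} {c : ℕ → ℕ} {x : ℕ → ℕ → ℝ} {lam : ℕ × ℕ × ℕ → ℝ}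

lemma one_le_nxt (i : ℕ) : 1 ≤ nxt k n c i := by
  unfold nxt
  split_ifs with h
  · have := (Nat.find_spec h).1.1
    omega
  · omega

lemma chainItem_succ (i s : ℕ) :
    chainItem k n c i (s + 1) = nxt k n c (chainItem k n c i s) :=
  Function.iterate_succ_apply' _ _ _

lemma one_le_chainItem {i : ℕ} (hi : 1 ≤ i) : ∀ s, 1 ≤ chainItem k n c i s
  | 0 => hi
  | s + 1 => chainItem_succ (k := k) (n := n) (c := c) i s ▸ one_le_nxt _

lemma Fval_of_le {t : ℕ} (ht : t ≤ k) : Fval k n c x t = 0 := by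
  rw [Fval, Icc_eq_empty (by omega), sum_empty]

lemma lt_of_pos_le_Fval {t : ℕ} {a : ℝ} (ha : 0 < a)
    (h : a ≤ Fval k n c x t) : k < t := by
  by_contra! ht
  rw [Fval_of_le ht] at h
  linarith

lemma le_and_le_Fval_of_prev_threshold {δ : ℝ} {q t : ℕ} (hδ : 0 < δ)
    (hq : 1 ≤ q) (h₁ : q = 1 → t = k) (h₂ : 2 ≤ q → ((q : ℝ) - 1) * δ ≤ Fval k n c x t) :
    k ≤ t ∧ ((q : ℝ) - 1) * δ ≤ Fval k n c x t := by
  rcases hq.eq_or_lt with rfl | hq₂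
  · simp [h₁ rfl, Fval_of_le le_rfl]
  · have hq₂' : (2 : ℝ) ≤ q := by exact_mod_cast hq₂
    exact ⟨(lt_of_pos_le_Fval (by nlinarith) (h₂ hq₂)).le, h₂ hq₂⟩

open scoped Classical in
/-- The MSM `p = (i, m, j)` occupies the times `p.2.2 + 1, …, p.2.2 + p.2.1`. -/
noncomputable def msmWeight (k n : ℕ) (c : ℕ → ℕ) (lam : ℕ × ℕ × ℕ → ℝ)
    (P : ℕ × ℕ × ℕ → Prop) : ℝ :=
  ∑ p ∈ (msmTriples k n).filter (fun p => IsMSM k n c p.1 p.2.1 p.2.2 ∧ P p), lam p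

open scoped Classical in
lemma msmWeight_eq_sum (P : ℕ × ℕ × ℕ → Prop) [DecidablePred P] :
    msmWeight k n c lam P =
      ∑ p ∈ (msmTriples k n).filter (fun p => IsMSM k n c p.1 p.2.1 p.2.2 ∧ P p), lam p := by
  unfold msmWeight
  congr!

lemma msmWeight_mono (hlam : ∀ p, 0 ≤ lam p) {P Q : ℕ × ℕ × ℕ → Prop}
    (h : ∀ p, IsMSM k n c p.1 p.2.1 p.2.2 → P p → Q p) :
    msmWeight k n c lam P ≤ msmWeight k n c lam Q := by
  refine sum_le_sum_of_subset_of_nonneg (fun p hp => ?_) fun p _ _ => hlam p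
  simp only [mem_filter] at hp ⊢
  exact ⟨hp.1, hp.2.1, h p hp.2.1 hp.2.2⟩

lemma msmWeight_and_add_msmWeight_and_not (P Q : ℕ × ℕ × ℕ → Prop) :
    msmWeight k n c lam (fun p => P p ∧ Q p) + msmWeight k n c lam (fun p => P p ∧ ¬Q p) =
      msmWeight k n c lam P := by
  classical
  unfold msmWeight
  conv_rhs => rw [← sum_filter_add_sum_filter_not _ Q]
  congr 1 <;> congr 1 <;> ext p <;> simp only [mem_filter, and_assoc]

lemma msmWeight_add_le (hlam : ∀ p, 0 ≤ lam p) {P Q R : ℕ × ℕ × ℕ → Prop}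
    (hPQ : ∀ p, P p → ¬Q p) (hP : ∀ p, P p → R p) (hQ : ∀ p, Q p → R p) :
    msmWeight k n c lam P + msmWeight k n c lam Q ≤ msmWeight k n c lam R := by
  rw [← msmWeight_and_add_msmWeight_and_not R Q, add_comm (msmWeight k n c lam P)]
  exact add_le_add (msmWeight_mono hlam fun p _ hp => ⟨hQ p hp, hp⟩)
    (msmWeight_mono hlam fun p _ hp => ⟨hP p hp, hPQ p hp⟩)

lemma msmWeight_covering_eq_one (hx : Feasible k n c x) (hlam : IsMSMDecomp k n c x lam)
    {t : ℕ} (ht₁ : k + 1 ≤ t) (ht₂ : t ≤ k + n) :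
    msmWeight k n c lam (fun p => p.2.2 < t ∧ t ≤ p.2.2 + p.2.1) = 1 := by
  classical
  rw [msmWeight_eq_sum]
  set C := (msmTriples k n).filter
    (fun p => IsMSM k n c p.1 p.2.1 p.2.2 ∧ p.2.2 < t ∧ t ≤ p.2.2 + p.2.1)
  have hmaps : ∀ p ∈ C, chainItem k n c p.1 (t - p.2.2 - 1) ∈ Icc 1 (min t n) := by
    intro p hp
    obtain ⟨-, hmsm, hstart, hend⟩ := mem_filter.1 hp
    have hs : t - p.2.2 - 1 < p.2.1 := by omega
    have := hmsm.2.2.2.2.2.1 _ hs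
    exact mem_Icc.2 ⟨one_le_chainItem hmsm.1 _, le_min (by omega) (hmsm.2.2.2.2.1 _ hs)⟩
  have hfiber : ∀ i ∈ Icc 1 (min t n),
      ∑ p ∈ C.filter (fun p => chainItem k n c p.1 (t - p.2.2 - 1) = i), lam p = x i t := by
    intro i hi
    obtain ⟨hi₁, hi₂⟩ := mem_Icc.1 hi
    rw [hlam.2.2 i t hi₁ (hi₂.trans (min_le_right _ _)), filter_filter]
    refine sum_congr (filter_congr fun p _ => ⟨?_, ?_⟩) fun _ _ => rfl
    · rintro ⟨⟨hmsm, hstart, hend⟩, hitem⟩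
      exact ⟨hmsm, t - p.2.2 - 1, by omega, hitem, by omega⟩
    · rintro ⟨hmsm, s, hs, hs_item, rfl⟩
      exact ⟨⟨hmsm, by omega, by omega⟩, by rwa [show p.2.2 + s + 1 - p.2.2 - 1 = s by omega]⟩
  rw [← sum_fiberwise_of_maps_to hmaps, sum_congr rfl hfiber, hx.2.2.1 t ht₁ ht₂]

lemma sum_yval_eq_msmWeight_ending (hx : Feasible k n c x) (hlam : IsMSMDecomp k n c x lam)
    (t : ℕ) :
    ∑ i ∈ Icc 1 t, yval k n c x i t = msmWeight k n c lam (fun p => p.2.2 + p.2.1 = t) := by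
  classical
  rw [msmWeight_eq_sum]
  set E := (msmTriples k n).filter (fun p => IsMSM k n c p.1 p.2.1 p.2.2 ∧ p.2.2 + p.2.1 = t)
  have hmaps : ∀ p ∈ E, chainItem k n c p.1 (p.2.1 - 1) ∈ Icc 1 (min t n) := by
    intro p hp
    obtain ⟨-, hmsm, hend⟩ := mem_filter.1 hp
    have hs : p.2.1 - 1 < p.2.1 := by have := hmsm.2.1; omega
    have := hmsm.2.2.2.2.2.1 _ hs
    exact mem_Icc.2 ⟨one_le_chainItem hmsm.1 _, le_min (by omega) (hmsm.2.2.2.2.1 _ hs)⟩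
  -- `y_{i,t}` only sees the MSMs in which `i` is matched at `t` as the last item: otherwise
  -- the next item `n(i)` is matched at `t + 1`, so `n(i) ≤ t + 1`
  have hfiber : ∀ i ∈ Icc 1 (min t n),
      ∑ p ∈ E.filter (fun p => chainItem k n c p.1 (p.2.1 - 1) = i), lam p =
        yval k n c x i t := by
    intro i hi
    obtain ⟨hi₁, hi₂⟩ := mem_Icc.1 hi
    unfold yval
    split_ifs with hnext
    · rw [hlam.2.2 i t hi₁ (hi₂.trans (min_le_right _ _)), filter_filter]
      refine sum_congr (filter_congr fun p _ => ⟨?_, ?_⟩) fun _ _ => rfl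
      · rintro ⟨⟨hmsm, hend⟩, hlast_item⟩
        have := hmsm.2.1
        exact ⟨hmsm, p.2.1 - 1, by omega, hlast_item, by omega⟩
      · rintro ⟨hmsm, s, hs, hs_item, rfl⟩
        have hlast : s = p.2.1 - 1 := by
          by_contra hne
          have := hmsm.2.2.2.2.2.1 (s + 1) (by omega)
          rw [chainItem_succ, hs_item] at this
          omega
        exact ⟨⟨hmsm, by omega⟩, hlast ▸ hs_item⟩
    · refine sum_eq_zero fun p hp => absurd ?_ hnext
      obtain ⟨hpE, hlast_item⟩ := mem_filter.1 hp
      obtain ⟨-, hmsm, hend⟩ := mem_filter.1 hpE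
      have := hmsm.2.2.2.2.2.2
      rw [hlast_item] at this
      omega
  have houtside : ∀ i ∈ Icc 1 t, i ∉ Icc 1 (min t n) → yval k n c x i t = 0 := by
    intro i hi hi'
    simp only [mem_Icc] at hi hi'
    simp [yval, hx.1 i t (by omega)]
  rw [← sum_subset (Icc_subset_Icc_right (min_le_left t n)) houtside,
    ← sum_fiberwise_of_maps_to hmaps, sum_congr rfl hfiber]

lemma Fval_eq_msmWeight (hx : Feasible k n c x) (hlam : IsMSMDecomp k n c x lam) (t : ℕ) :
    Fval k n c x t = msmWeight k n c lam (fun p => p.2.2 + p.2.1 ≤ t) := by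
  classical
  have hmaps : ∀ p ∈ (msmTriples k n).filter
      (fun p => IsMSM k n c p.1 p.2.1 p.2.2 ∧ p.2.2 + p.2.1 ≤ t), p.2.2 + p.2.1 ∈ Icc (k + 1) t := by
    intro p hp
    obtain ⟨-, hmsm, hend⟩ := mem_filter.1 hp
    have := hmsm.2.1
    have := hmsm.2.2.1
    exact mem_Icc.2 ⟨by omega, hend⟩
  rw [Fval, msmWeight_eq_sum, ← sum_fiberwise_of_maps_to hmaps]
  refine sum_congr rfl fun s hs => ?_
  rw [sum_yval_eq_msmWeight_ending hx hlam, msmWeight_eq_sum, filter_filter]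
  refine sum_congr (filter_congr fun p _ => ?_) fun _ _ => rfl
  have := (mem_Icc.1 hs).2
  constructor
  · rintro ⟨hmsm, hend⟩
    exact ⟨⟨hmsm, by omega⟩, hend⟩
  · rintro ⟨⟨hmsm, -⟩, hend⟩
    exact ⟨hmsm, hend⟩

lemma Fval_le_Fval_k_add_n (hx : Feasible k n c x) (hlam : IsMSMDecomp k n c x lam) (t : ℕ) :
    Fval k n c x t ≤ Fval k n c x (k + n) := by
  rw [Fval_eq_msmWeight hx hlam, Fval_eq_msmWeight hx hlam]
  exact msmWeight_mono hlam.1 fun p hmsm _ => hmsm.2.2.2.1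

end

open scoped Classical in
theorem stmt9_general (k n : ℕ) (c : ℕ → ℕ) (x : ℕ → ℕ → ℝ)
    (hx : Feasible k n c x) (lam : ℕ × ℕ × ℕ → ℝ)
    (hlam : IsMSMDecomp k n c x lam)
    (δ₃ : ℝ) (hδ₁ : 0 < δ₃)
    (q : ℕ) (hq : 1 ≤ q)
    (tq : ℕ)
    (htq : (q : ℝ) * δ₃ ≤ Fval k n c x tq ∧
           ∀ t, (q : ℝ) * δ₃ ≤ Fval k n c x t → tq ≤ t)
    (tq1 : ℕ)
    (htq1 : (q = 1 → tq1 = k) ∧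
            (2 ≤ q → (((q : ℝ) - 1) * δ₃ ≤ Fval k n c x tq1 ∧
              ∀ t, ((q : ℝ) - 1) * δ₃ ≤ Fval k n c x t → tq1 ≤ t))) :
    ∀ j, tq1 < j → j ≤ tq →
      (1 : ℝ) - δ₃ ≤
        ∑ p ∈ (msmTriples k n).filter
            (fun p => IsMSM k n c p.1 p.2.1 p.2.2 ∧ p.2.2 < j ∧ tq ≤ p.2.2 + p.2.1),
          lam p := by
  intro j hj₁ hj₂
  obtain ⟨hk_tq1, hF_tq1⟩ :=
    le_and_le_Fval_of_prev_threshold hδ₁ hq htq1.1 fun hq₂ => (htq1.2 hq₂).1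
  have htq_le : tq ≤ k + n := htq.2 _ (htq.1.trans (Fval_le_Fval_k_add_n hx hlam tq))
  have hF_pred : Fval k n c x (tq - 1) < q * δ₃ :=
    lt_of_not_ge fun h => by have := htq.2 _ h; omega
  have hearly := msmWeight_add_le (k := k) (n := n) (c := c) hlam.1
    (P := fun p => (p.2.2 < j ∧ j ≤ p.2.2 + p.2.1) ∧ ¬tq ≤ p.2.2 + p.2.1)
    (Q := fun p => p.2.2 + p.2.1 ≤ tq1) (R := fun p => p.2.2 + p.2.1 ≤ tq - 1)
    (fun p hp => by omega) (fun p hp => by omega) (fun p hp => by omega)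
  rw [← Fval_eq_msmWeight hx hlam, ← Fval_eq_msmWeight hx hlam] at hearly
  have hcover := msmWeight_and_add_msmWeight_and_not (k := k) (n := n) (c := c) (lam := lam)
    (fun p => p.2.2 < j ∧ j ≤ p.2.2 + p.2.1) (fun p => tq ≤ p.2.2 + p.2.1)
  rw [msmWeight_covering_eq_one hx hlam (by omega) (by omega)] at hcover
  calc 1 - δ₃
      ≤ msmWeight k n c lam (fun p => (p.2.2 < j ∧ j ≤ p.2.2 + p.2.1) ∧ tq ≤ p.2.2 + p.2.1) := by
        linarith
    _ ≤ msmWeight k n c lam (fun p => p.2.2 < j ∧ tq ≤ p.2.2 + p.2.1) :=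
        msmWeight_mono hlam.1 fun p _ hp => ⟨hp.1.1, hp.2⟩
    _ = _ := msmWeight_eq_sum _

open scoped Classical in
/-- Let `x` be a feasible fractional solution with MSM decomposition `λ`, let
`δ₃ ∈ (0,1)` and `q ≥ 1` with `q·δ₃ ≤ z(x)`.  With `t_q = min{t : F(t) ≥ q·δ₃}`
(and `t_0 = k`), for every time `j` with `t_{q-1} < j ≤ t_q`, the total weight of MSMs
started before time `j` whose matched interval reaches `t_q` is at least `1 - δ₃`. -/
theorem stmt9 (k n : ℕ) (hk : 1 ≤ k) (hn : 1 ≤ n) (c : ℕ → ℕ) (x : ℕ → ℕ → ℝ)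
    (hx : Feasible k n c x) (lam : ℕ × ℕ × ℕ → ℝ)
    (hlam : IsMSMDecomp k n c x lam)
    (δ₃ : ℝ) (hδ₁ : 0 < δ₃) (hδ₂ : δ₃ < 1)
    (q : ℕ) (hq : 1 ≤ q) (hqz : (q : ℝ) * δ₃ ≤ cost k n c x)
    (tq : ℕ)
    (htq : (q : ℝ) * δ₃ ≤ Fval k n c x tq ∧
           ∀ t, (q : ℝ) * δ₃ ≤ Fval k n c x t → tq ≤ t)
    (tq1 : ℕ)
    (htq1 : (q = 1 → tq1 = k) ∧
            (2 ≤ q → (((q : ℝ) - 1) * δ₃ ≤ Fval k n c x tq1 ∧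
              ∀ t, ((q : ℝ) - 1) * δ₃ ≤ Fval k n c x t → tq1 ≤ t))) :
    ∀ j, tq1 < j → j ≤ tq →
      (1 : ℝ) - δ₃ ≤
        ∑ p ∈ (msmTriples k n).filter
            (fun p => IsMSM k n c p.1 p.2.1 p.2.2 ∧ p.2.2 < j ∧ tq ≤ p.2.2 + p.2.1),
          lam p :=
  stmt9_general k n c x hx lam hlam δ₃ hδ₁ q hq tq htq tq1 htq1
end
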